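/- arXiv:0808.2032 — 2 statements merged into one kernel-verified Lean document; each statement's English description precedes it below -/
import Mathlib

section
/- Let A be an F-algebra with elements T, X_1, X_2 as above (X_1, X_2 invertible and commuting, T X_1 T = qX_2, T² = (q−1)T + q). Define Θ := T(1 − X_1X_2^{-1}) + 1 − q. Then Θ² = (1 − qX_2X_1^{-1})(1 − qX_1X_2^{-1}). -/
/-!
Since `T` is invertible (`T⁻¹ = q⁻¹(T - (q - 1))`), the relation `T X₁ T = q X₂` can be moved past
`T` to give the Bernstein-type relation `Y T = T Z - (q - 1)(Z + 1)` for `Y = X₁X₂⁻¹` and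
`Z = X₂X₁⁻¹ = Y⁻¹`. With the quadratic relation this yields `T(1 - Y)T = 2(q - 1)T + q(1 - Z)`,
so in `Θ² = (T(1 - Y))² + 2(1 - q)T(1 - Y) + (1 - q)²` all terms involving `T` cancel, leaving
`q(1 - Z)(1 - Y) + (1 - q)² = (1 - qZ)(1 - qY)`.
-/

namespace LusztigIntertwiner

variable {R A : Type*} [CommRing R] [Ring A] [Algebra R A] {q : R} {T : A}

theorem mul_self_eq_smul_add_smul_one (hT2 : T * T = (q - 1) • T + algebraMap R A q) :
    T * T = (q - 1) • T + q • (1 : A) := by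
  rw [hT2, Algebra.algebraMap_eq_smul_one]

section Quadratic

variable {X₁ X₂ : A} (hq : IsUnit q) (hT2 : T * T = (q - 1) • T + algebraMap R A q)
  (hTXT : T * X₁ * T = q • X₂)
include hq hT2 hTXT

theorem X₂_mul_T : X₂ * T = T * X₁ + (q - 1) • X₂ := by
  rw [← hq.smul_left_cancel]
  calc q • (X₂ * T) = T * X₁ * (T * T) := by rw [← smul_mul_assoc, ← hTXT, mul_assoc]
    _ = (q - 1) • (T * X₁ * T) + q • (T * X₁) := by
      rw [mul_self_eq_smul_add_smul_one hT2, mul_add, mul_smul_comm, mul_smul_comm, mul_one]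
    _ = q • (T * X₁ + (q - 1) • X₂) := by rw [hTXT]; module

theorem T_mul_X₂ : T * X₂ = X₁ * T + (q - 1) • X₂ := by
  rw [← hq.smul_left_cancel]
  calc q • (T * X₂) = T * T * (X₁ * T) := by
        rw [← mul_smul_comm, ← hTXT, mul_assoc, mul_assoc]
    _ = (q - 1) • (T * X₁ * T) + q • (X₁ * T) := by
      rw [mul_self_eq_smul_add_smul_one hT2, add_mul, smul_mul_assoc, smul_mul_assoc, one_mul,
        mul_assoc]
    _ = q • (X₁ * T + (q - 1) • X₂) := by rw [hTXT]; module

end Quadratic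

theorem ratio_mul_T {X₁ X₂ : Aˣ} (hq : IsUnit q)
    (hT2 : T * T = (q - 1) • T + algebraMap R A q) (hTXT : T * X₁ * T = q • (X₂ : A)) :
    (X₁ * ↑X₂⁻¹ : A) * T = T * (X₂ * ↑X₁⁻¹) - (q - 1) • ((X₂ * ↑X₁⁻¹ : A) + 1) := by
  have hX₂inv : (↑X₂⁻¹ : A) * T = T * ↑X₁⁻¹ - (q - 1) • (↑X₁⁻¹ : A) := by
    calc (↑X₂⁻¹ : A) * T = ↑X₂⁻¹ * (T * X₁) * ↑X₁⁻¹ := by simp [mul_assoc]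
      _ = ↑X₂⁻¹ * (X₂ * T - (q - 1) • (X₂ : A)) * ↑X₁⁻¹ := by
        rw [X₂_mul_T hq hT2 hTXT, add_sub_cancel_right]
      _ = T * ↑X₁⁻¹ - (q - 1) • (↑X₁⁻¹ : A) := by
        rw [mul_sub, mul_smul_comm, Units.inv_mul_cancel_left, Units.inv_mul, sub_mul,
          smul_mul_assoc, one_mul]
  have hX₁ : (X₁ : A) * T = T * X₂ - (q - 1) • (X₂ : A) := by
    rw [T_mul_X₂ hq hT2 hTXT, add_sub_cancel_right]
  calc (X₁ * ↑X₂⁻¹ : A) * T = (X₁ * T) * ↑X₁⁻¹ - (q - 1) • (X₁ * ↑X₁⁻¹ : A) := by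
        rw [mul_assoc, hX₂inv, mul_sub, mul_smul_comm, mul_assoc]
    _ = T * (X₂ * ↑X₁⁻¹) - (q - 1) • ((X₂ * ↑X₁⁻¹ : A) + 1) := by
      rw [hX₁, Units.mul_inv, sub_mul, smul_mul_assoc, mul_assoc]; module

def intertwiner (q : R) (T Y : A) : A := T * (1 - Y) + algebraMap R A (1 - q)

section Square

variable {Y Z : A} (hT2 : T * T = (q - 1) • T + algebraMap R A q)
  (hYT : Y * T = T * Z - (q - 1) • (Z + 1))
include hT2 hYT

theorem T_mul_one_sub_mul_T : T * (1 - Y) * T = (2 * (q - 1)) • T + q • (1 - Z) := by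
  rw [mul_assoc, sub_mul, one_mul, hYT, mul_sub, mul_sub, ← mul_assoc,
    mul_self_eq_smul_add_smul_one hT2, mul_smul_comm, mul_add, mul_one]
  simp only [add_mul, smul_mul_assoc, one_mul]
  module

theorem intertwiner_mul_self (hZY : Z * Y = 1) :
    intertwiner q T Y * intertwiner q T Y = (1 - q • Z) * (1 - q • Y) := by
  have hS : T * (1 - Y) * (T * (1 - Y)) =
      (2 * (q - 1)) • (T * (1 - Y)) + q • (1 - Z - Y + 1) := by
    rw [← mul_assoc, T_mul_one_sub_mul_T hT2 hYT, add_mul, smul_mul_assoc, smul_mul_assoc,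
      sub_mul, one_mul, mul_sub Z, mul_one, hZY]
    module
  rw [intertwiner, Algebra.algebraMap_eq_smul_one, add_mul, mul_add, mul_add, hS]
  simp only [sub_mul, mul_sub, one_mul, mul_one, smul_mul_assoc, mul_smul_comm, smul_smul, hZY]
  module

end Square

end LusztigIntertwiner

open LusztigIntertwiner in
theorem lusztig_intertwiner_square_general
    (F : Type*) [Field F] (A : Type*) [Ring A] [Algebra F A]
    (q : F) (hq : q ≠ 0) (T X₁ X₂ X₁inv X₂inv : A)
    (hX₁ : X₁ * X₁inv = 1) (hX₁' : X₁inv * X₁ = 1)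
    (hX₂ : X₂ * X₂inv = 1) (hX₂' : X₂inv * X₂ = 1)
    (hTXT : T * X₁ * T = q • X₂)
    (hT2 : T * T = (q - 1) • T + algebraMap F A q) :
    (T * (1 - X₁ * X₂inv) + algebraMap F A (1 - q)) *
      (T * (1 - X₁ * X₂inv) + algebraMap F A (1 - q))
    = (1 - q • (X₂ * X₁inv)) * (1 - q • (X₁ * X₂inv)) := by
  let u₁ : Aˣ := ⟨X₁, X₁inv, hX₁, hX₁'⟩
  let u₂ : Aˣ := ⟨X₂, X₂inv, hX₂, hX₂'⟩
  have hZY : (u₂ * ↑u₁⁻¹ : A) * (u₁ * ↑u₂⁻¹) = 1 := by simp [mul_assoc]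
  exact intertwiner_mul_self hT2 (ratio_mul_T (X₁ := u₁) (X₂ := u₂) hq.isUnit hT2 hTXT) hZY

/-- The Lusztig intertwining element `Θ = T(1 - X_1X_2⁻¹) + 1 - q` satisfies
`Θ² = (1 - qX_2X_1⁻¹)(1 - qX_1X_2⁻¹)`. -/
theorem lusztig_intertwiner_square
    (F : Type*) [Field F] (A : Type*) [Ring A] [Algebra F A]
    (q : F) (hq : q ≠ 0) (T X₁ X₂ X₁inv X₂inv : A)
    (hX₁ : X₁ * X₁inv = 1) (hX₁' : X₁inv * X₁ = 1)
    (hX₂ : X₂ * X₂inv = 1) (hX₂' : X₂inv * X₂ = 1)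
    (hcomm : X₁ * X₂ = X₂ * X₁)
    (hTXT : T * X₁ * T = q • X₂)
    (hT2 : T * T = (q - 1) • T + algebraMap F A q) :
    (T * (1 - X₁ * X₂inv) + algebraMap F A (1 - q)) *
      (T * (1 - X₁ * X₂inv) + algebraMap F A (1 - q))
    = (1 - q • (X₂ * X₁inv)) * (1 - q • (X₁ * X₂inv)) :=
  lusztig_intertwiner_square_general F A q hq T X₁ X₂ X₁inv X₂inv hX₁ hX₁' hX₂ hX₂' hTXT hT2
end

section
/- Let F be a field, q ∈ F×, and A an F-algebra with commuting invertible elements Y_1, Y_2 and distinct scalars a, b ∈ F× such that Y_1 − a and Y_2 − b are nilpotent. Then 1 − Y_1Y_2^{-1} is invertible in A, so P := (1−q)(1 − Y_1Y_2^{-1})^{-1} is well-defined; moreover (1 − P)(q + P) = (Y_2 − qY_1)(Y_1 − qY_2)·((Y_2 − Y_1)(Y_1 − Y_2))^{-1}. -/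
/-!
`Y₂ - Y₁` is a nonzero scalar `b - a` plus a nilpotent commuting with it, hence a unit, and
`1 - Y₁Y₂⁻¹ = (Y₂ - Y₁)Y₂⁻¹`, so `P = (1 - q)Y₂(Y₂ - Y₁)⁻¹`. Then
`(q + P)(Y₂ - Y₁) = Y₂ - qY₁` and `(1 - P)(Y₁ - Y₂) = Y₁ - qY₂`, and since everything in sight
commutes the identity follows after multiplying by the unit `(Y₂ - Y₁)(Y₁ - Y₂)`.
-/

open scoped Ring

theorem Commute.isUnit_sub_of_isNilpotent_sub_algebraMap {F A : Type*} [Field F] [Ring A]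
    [Algebra F A] {x y : A} {a b : F} (hc : Commute x y) (hab : a ≠ b)
    (hx : IsNilpotent (x - algebraMap F A a)) (hy : IsNilpotent (y - algebraMap F A b)) :
    IsUnit (x - y) := by
  have hnil : IsNilpotent ((x - algebraMap F A a) - (y - algebraMap F A b)) := by
    refine Commute.isNilpotent_sub ?_ hx hy
    apply_rules [Commute.sub_left, Commute.sub_right, Algebra.commute_algebraMap_left,
      Algebra.commute_algebraMap_right, Commute.all, Commute.map]
  have hunit : IsUnit (algebraMap F A (a - b)) :=
    (IsUnit.mk0 _ (sub_ne_zero.mpr hab)).map _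
  have hsplit : x - y =
      algebraMap F A (a - b) + ((x - algebraMap F A a) - (y - algebraMap F A b)) := by
    rw [map_sub]; abel
  rw [hsplit]
  exact hnil.isUnit_add_left_of_commute hunit (Algebra.commute_algebraMap_right _ _)

section Ring

variable {A : Type*} [Ring A]

theorem one_sub_mul_ringInverse {y : A} (hy : IsUnit y) (x : A) :
    1 - x * y⁻¹ʳ = (y - x) * y⁻¹ʳ := by
  rw [sub_mul, Ring.mul_inverse_cancel y hy]

theorem Ring.inverse_one_sub_mul_inverse {y : A} (hy : IsUnit y) (x : A) :
    (1 - x * y⁻¹ʳ)⁻¹ʳ = y * (y - x)⁻¹ʳ := by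
  rw [one_sub_mul_ringInverse hy, Ring.inverse_mul (Or.inr hy.ringInverse),
    Ring.inverse_inverse hy]

theorem one_sub_mul_algebraMap_add_eq_mul_inverse {R : Type*} [CommRing R] [Algebra R A]
    (q : R) {x y P : A} (hc : Commute x y) (hu : IsUnit (y - x))
    (hP : P = (1 - q) • (y * (y - x)⁻¹ʳ)) :
    (1 - P) * (algebraMap R A q + P) =
      (y - q • x) * (x - q • y) * ((y - x) * (x - y))⁻¹ʳ := by
  have hD : IsUnit ((y - x) * (x - y)) := by
    rw [← neg_sub y x, mul_neg]
    exact (hu.mul hu).neg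
  have hPu : P * (y - x) = (1 - q) • y := by
    rw [hP, smul_mul_assoc, Ring.inverse_mul_cancel_right _ _ hu]
  have hplus : (algebraMap R A q + P) * (y - x) = y - q • x := by
    rw [add_mul, hPu, ← Algebra.smul_def]; module
  have hminus : (1 - P) * (x - y) = x - q • y := by
    rw [← neg_sub y x, mul_neg, sub_mul, one_mul, hPu]; module
  have hc₁ : Commute (y - q • x) (x - y) := by
    apply_rules [Commute.sub_left, Commute.sub_right, Commute.smul_left, Commute.refl, hc.symm]
  have hc₂ : Commute (x - q • y) (y - q • x) := by
    apply_rules [Commute.sub_left, Commute.sub_right, Commute.smul_left, Commute.smul_right,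
      Commute.refl, hc, hc.symm]
  rw [Ring.eq_mul_inverse_iff_mul_eq _ _ _ hD]
  calc (1 - P) * (algebraMap R A q + P) * ((y - x) * (x - y))
      = (1 - P) * ((y - q • x) * (x - y)) := by rw [← hplus]; simp only [mul_assoc]
    _ = (1 - P) * (x - y) * (y - q • x) := by rw [hc₁.eq, mul_assoc]
    _ = (y - q • x) * (x - q • y) := by rw [hminus, hc₂.eq]

end Ring

theorem QEPreUs_identity_general
    (F : Type*) [Field F] (A : Type*) [Ring A] [Algebra F A]
    (q : F) (Y₁ Y₂ : A)
    (hY₂ : IsUnit Y₂) (hcomm : Y₁ * Y₂ = Y₂ * Y₁)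
    (a b : F) (hab : a ≠ b)
    (hna : IsNilpotent (Y₁ - algebraMap F A a))
    (hnb : IsNilpotent (Y₂ - algebraMap F A b)) :
    IsUnit (1 - Y₁ * Ring.inverse Y₂) ∧
    (1 - (1 - q) • Ring.inverse (1 - Y₁ * Ring.inverse Y₂)) *
        (algebraMap F A q + (1 - q) • Ring.inverse (1 - Y₁ * Ring.inverse Y₂))
      = (Y₂ - q • Y₁) * (Y₁ - q • Y₂) *
          Ring.inverse ((Y₂ - Y₁) * (Y₁ - Y₂)) := by
  have hc : Commute Y₁ Y₂ := hcomm
  have hu : IsUnit (Y₂ - Y₁) :=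
    hc.symm.isUnit_sub_of_isNilpotent_sub_algebraMap hab.symm hnb hna
  refine ⟨?_, ?_⟩
  · rw [one_sub_mul_ringInverse hY₂]
    exact hu.mul hY₂.ringInverse
  · rw [Ring.inverse_one_sub_mul_inverse hY₂]
    exact one_sub_mul_algebraMap_add_eq_mul_inverse q hc hu rfl

/-- Identity (QEPreUs): with `Y₁, Y₂` commuting invertible elements such that
`Y₁ - a` and `Y₂ - b` are nilpotent for distinct nonzero scalars `a ≠ b`,
the element `1 - Y₁Y₂⁻¹` is invertible and, setting
`P = (1-q)(1 - Y₁Y₂⁻¹)⁻¹`, one has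
`(1-P)(q+P) = (Y₂-qY₁)(Y₁-qY₂)((Y₂-Y₁)(Y₁-Y₂))⁻¹`. -/
theorem QEPreUs_identity
    (F : Type*) [Field F] (A : Type*) [Ring A] [Algebra F A]
    (q : F) (hq : q ≠ 0) (Y₁ Y₂ : A)
    (hY₁ : IsUnit Y₁) (hY₂ : IsUnit Y₂) (hcomm : Y₁ * Y₂ = Y₂ * Y₁)
    (a b : F) (ha : a ≠ 0) (hb : b ≠ 0) (hab : a ≠ b)
    (hna : IsNilpotent (Y₁ - algebraMap F A a))
    (hnb : IsNilpotent (Y₂ - algebraMap F A b)) :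
    IsUnit (1 - Y₁ * Ring.inverse Y₂) ∧
    (1 - (1 - q) • Ring.inverse (1 - Y₁ * Ring.inverse Y₂)) *
        (algebraMap F A q + (1 - q) • Ring.inverse (1 - Y₁ * Ring.inverse Y₂))
      = (Y₂ - q • Y₁) * (Y₁ - q • Y₂) *
          Ring.inverse ((Y₂ - Y₁) * (Y₁ - Y₂)) :=
  QEPreUs_identity_general F A q Y₁ Y₂ hY₂ hcomm a b hab hna hnb
end
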